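/- arXiv:1712.08312 — 8 statements merged into one kernel-verified Lean document; each statement's English description precedes it below -/
import Mathlib

section
/- Let F be a linear ordered field equipped with its order topology, X a completely F-regular space, and A(X,F) an intermediate ring. For f, g ∈ A(X,F), the annihilator of f in A(X,F) is contained in the annihilator of g in A(X,F) if and only if int_X Z(f) ⊆ int_X Z(g). -/
open Set

/-- `Pz a` : the intersection of all minimal prime ideals of `R` which contain `a`. -/
def Pz {R : Type*} [CommRing R] (a : R) : Set R :=
  ⋂ P ∈ {P : Ideal R | P ∈ minimalPrimes R ∧ a ∈ P}, (P : Set R)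

/-- A proper ideal `I` is a `z°`-ideal if `Pz a ⊆ I` for every `a ∈ I`. -/
def IsZoIdeal {R : Type*} [CommRing R] (I : Ideal R) : Prop :=
  I ≠ ⊤ ∧ ∀ a ∈ I, Pz a ⊆ (I : Set R)

/-- The zero set `Z(f)` of a continuous function `f`. -/
def ZSet {X F : Type*} [TopologicalSpace X] [TopologicalSpace F] [Zero F]
    (f : C(X, F)) : Set X := {x | f x = 0}

/-- `f` is bounded over `X` (i.e. `f ∈ B(X,F)`). -/
def BddF {X F : Type*} [TopologicalSpace X] [Field F] [LinearOrder F] [IsStrictOrderedRing F] [TopologicalSpace F]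
    (f : C(X, F)) : Prop := ∃ l : F, 0 < l ∧ ∀ x, |f x| ≤ l

/-- `X` is completely `F`-regular: Hausdorff, and points can be separated from closed
sets by bounded `F`-valued continuous functions. -/
def CompletelyFRegular (X F : Type*) [TopologicalSpace X] [Field F] [LinearOrder F] [IsStrictOrderedRing F]
    [TopologicalSpace F] : Prop :=
  T2Space X ∧ ∀ K : Set X, IsClosed K → ∀ x ∉ K, ∃ f : C(X, F),
    BddF f ∧ f x = 0 ∧ ∀ k ∈ K, f k = 1

/-- `A` is an intermediate ring: a subring of `C(X,F)` containing all of `B(X,F)`. -/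
def IsIntermediate {X F : Type*} [TopologicalSpace X] [Field F] [LinearOrder F] [IsStrictOrderedRing F]
    [TopologicalSpace F] [OrderTopology F] (A : Subring C(X, F)) : Prop :=
  ∀ f : C(X, F), BddF f → f ∈ A

/-- An ideal of closed sets in `X`: a nonempty family of closed sets, closed under
finite unions and under passing to closed subsets. -/
def IsIdealOfClosedSets {X : Type*} [TopologicalSpace X] (P : Set (Set X)) : Prop :=
  P.Nonempty ∧ (∀ A ∈ P, IsClosed A) ∧ (∀ A ∈ P, ∀ B ∈ P, A ∪ B ∈ P) ∧
    ∀ C : Set X, IsClosed C → ∀ A ∈ P, C ⊆ A → C ∈ P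

/-- `X` is an almost `P_F`-space: every nonempty zero set has nonempty interior. -/
def AlmostPF (X F : Type*) [TopologicalSpace X] [Field F] [LinearOrder F] [IsStrictOrderedRing F]
    [TopologicalSpace F] : Prop :=
  ∀ f : C(X, F), (ZSet f).Nonempty → (interior (ZSet f)).Nonempty


open Function

/- Both annihilators are read off cozero sets: `f * h = 0` exactly when the open set
`support h` lies in `Z(f)`, i.e. in `int Z(f)`. Complete `F`-regularity supplies, for every
point of `int Z(f)`, a bounded function in `A` not vanishing there whose support lies in
`int Z(f)`. -/

section ZeroSet

variable {X R : Type*} [TopologicalSpace X] [TopologicalSpace R] [MulZeroClass R]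
  [NoZeroDivisors R] [ContinuousMul R]

theorem mul_eq_zero_iff_support_subset_zSet (f h : C(X, R)) :
    f * h = 0 ↔ support h ⊆ ZSet f := by
  simp only [ContinuousMap.ext_iff, ContinuousMap.mul_apply, ContinuousMap.zero_apply,
    mul_eq_zero, subset_def, mem_support, ZSet]
  exact forall_congr' fun _ => or_iff_not_imp_right

theorem mul_eq_zero_iff_support_subset_interior_zSet [T1Space R] (f h : C(X, R)) :
    f * h = 0 ↔ support h ⊆ interior (ZSet f) := by
  rw [mul_eq_zero_iff_support_subset_zSet, h.continuous.isOpen_support.subset_interior_iff]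

end ZeroSet

section CompletelyFRegular

variable {X F : Type*} [TopologicalSpace X] [Field F] [LinearOrder F] [IsStrictOrderedRing F]
  [TopologicalSpace F] [OrderTopology F]

theorem BddF.one_sub {f : C(X, F)} (hf : BddF f) : BddF (1 - f) := by
  obtain ⟨l, hl, hbound⟩ := hf
  refine ⟨1 + l, by linarith, fun x => ?_⟩
  calc |(1 - f) x| = |1 - f x| := rfl
    _ ≤ |1| + |f x| := abs_sub _ _
    _ ≤ 1 + l := by rw [abs_one]; linarith [hbound x]

theorem CompletelyFRegular.exists_bddF_support_subset (hX : CompletelyFRegular X F)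
    {U : Set X} (hU : IsOpen U) {x : X} (hx : x ∈ U) :
    ∃ h : C(X, F), BddF h ∧ h x ≠ 0 ∧ support h ⊆ U := by
  obtain ⟨k, hk, hkx, hkU⟩ := hX.2 Uᶜ hU.isClosed_compl x (not_not_intro hx)
  refine ⟨1 - k, hk.one_sub, by simp [hkx], fun y hy => ?_⟩
  by_contra hyU
  exact hy (by simp [hkU y hyU])

end CompletelyFRegular

/-- For f, g in an intermediate ring A(X,F), Ann(f) ⊆ Ann(g) iff
int_X Z(f) ⊆ int_X Z(g). -/
theorem stmt0 {X F : Type*} [TopologicalSpace X] [Field F] [LinearOrder F] [IsStrictOrderedRing F]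
    [TopologicalSpace F] [OrderTopology F]
    (hX : CompletelyFRegular X F)
    (A : Subring C(X, F)) (hA : IsIntermediate A)
    (f g : A) :
    {h : A | f * h = 0} ⊆ {h : A | g * h = 0} ↔
      interior (ZSet (f : C(X, F))) ⊆ interior (ZSet (g : C(X, F))) := by
  have ann_iff (u h : A) :
      u * h = 0 ↔ support (h : C(X, F)) ⊆ interior (ZSet (u : C(X, F))) := by
    rw [← ZeroMemClass.coe_eq_zero, MulMemClass.coe_mul,
      mul_eq_zero_iff_support_subset_interior_zSet]
  constructor
  · intro hann x hx
    obtain ⟨h, hbdd, hhx, hsupp⟩ := hX.exists_bddF_support_subset isOpen_interior hx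
    have hgh := hann ((ann_iff f ⟨h, hA h hbdd⟩).2 hsupp)
    exact (ann_iff g _).1 hgh hhx
  · intro hint h hfh
    exact (ann_iff g h).2 (((ann_iff f h).1 hfh).trans hint)
end

section
/- Let F be a linear ordered field equipped with its order topology, X a completely F-regular space, and A(X,F) an intermediate ring. For every f ∈ A(X,F), the intersection P_f of all minimal prime ideals of A(X,F) containing f equals {g ∈ A(X,F) : int_X Z(f) ⊆ int_X Z(g)}. -/
open Set

/-! In a reduced ring, `b ∈ P_a` iff every `c` with `c * a = 0` also kills `b`: if `a` lies in a
minimal prime `P` then some `c ∉ P` kills `a` (in `R_P`, which has a single prime, `a` is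
nilpotent), and the minimal primes intersect to zero. In `C(X, F)`, `c * f = 0` says that the open
cozero set of `c` lies in `Z(f)`, hence in `int Z(f)`; complete `F`-regularity provides, for every
open `U ∋ x`, a bounded `c` with `c x ≠ 0` whose cozero set lies in `U`. -/

section MinimalPrimes

variable {R : Type*} [CommRing R] [IsReduced R]

theorem exists_notMem_mul_eq_zero_of_mem_minimalPrimes {P : Ideal R} (hP : P ∈ minimalPrimes R)
    {a : R} (ha : a ∈ P) : ∃ c ∉ P, c * a = 0 := by
  have := hP.1.1
  have := Ring.KrullDimLE.of_isLocalization P hP (Localization.AtPrime P)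
  obtain ⟨n, hn⟩ := Ring.KrullDimLE.isNilpotent_iff_mem_maximalIdeal.mpr
    ((IsLocalization.AtPrime.to_map_mem_maximal_iff (Localization.AtPrime P) P a).mpr ha)
  rw [← map_pow, IsLocalization.map_eq_zero_iff P.primeCompl] at hn
  obtain ⟨⟨c, hc⟩, hca⟩ := hn
  refine ⟨c, hc, IsReduced.eq_zero _ ⟨n + 1, ?_⟩⟩
  calc (c * a) ^ (n + 1) = c ^ n * a * (c * a ^ n) := by ring
    _ = 0 := by rw [hca, mul_zero]

theorem mem_Pz_iff {a b : R} : b ∈ Pz a ↔ ∀ c, c * a = 0 → c * b = 0 := by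
  simp only [Pz, mem_iInter, mem_ofPred_eq, SetLike.mem_coe, and_imp]
  constructor
  · intro hb c hca
    by_contra hcb
    have hcb' : c * b ∉ sInf (minimalPrimes R) := by
      rw [minimalPrimes, Ideal.sInf_minimalPrimes, ← Ideal.zero_eq_bot]
      exact fun h => hcb (IsReduced.eq_zero _ (mem_nilradical.mp h))
    obtain ⟨P, hP, hcbP⟩ : ∃ P ∈ minimalPrimes R, c * b ∉ P := by
      simpa only [Submodule.mem_sInf, not_forall, exists_prop] using hcb'
    have hcP : c ∉ P := fun h => hcbP (P.mul_mem_right b h)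
    have haP : a ∈ P := (hP.1.1.mem_or_mem (hca ▸ P.zero_mem)).resolve_left hcP
    exact hcbP (P.mul_mem_left c (hb P hP haP))
  · intro hb P hP haP
    obtain ⟨c, hcP, hca⟩ := exists_notMem_mul_eq_zero_of_mem_minimalPrimes hP haP
    exact (hP.1.1.mem_or_mem (hb c hca ▸ P.zero_mem)).resolve_left hcP

end MinimalPrimes

instance ContinuousMap.instIsReduced {X R : Type*} [TopologicalSpace X] [CommRing R]
    [TopologicalSpace R] [IsTopologicalRing R] [IsReduced R] : IsReduced C(X, R) :=
  isReduced_of_injective ContinuousMap.coeFnRingHom DFunLike.coe_injective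

instance Subring.instIsReduced {R : Type*} [Ring R] [IsReduced R] (A : Subring R) :
    IsReduced A :=
  isReduced_of_injective A.subtype Subtype.val_injective

section ZeroSets

variable {X F : Type*} [TopologicalSpace X]

theorem isOpen_compl_ZSet [TopologicalSpace F] [T1Space F] [Zero F] (c : C(X, F)) :
    IsOpen (ZSet c)ᶜ :=
  (isClosed_singleton.preimage c.continuous).isOpen_compl

theorem mul_eq_zero_iff_compl_ZSet_subset [TopologicalSpace F] [MulZeroClass F]
    [NoZeroDivisors F] [ContinuousMul F] (c f : C(X, F)) :
    c * f = 0 ↔ (ZSet c)ᶜ ⊆ ZSet f := by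
  simp only [ContinuousMap.ext_iff, ContinuousMap.mul_apply, ContinuousMap.zero_apply,
    mul_eq_zero, subset_def, mem_compl_iff, ZSet, mem_ofPred_eq, or_iff_not_imp_left]

theorem CompletelyFRegular.exists_mem_compl_ZSet_subset [Field F] [LinearOrder F]
    [IsStrictOrderedRing F] [TopologicalSpace F] [OrderTopology F] (hX : CompletelyFRegular X F)
    {A : Subring C(X, F)} (hA : IsIntermediate A) {U : Set X} (hU : IsOpen U) {x : X}
    (hx : x ∈ U) : ∃ c ∈ A, c x ≠ 0 ∧ (ZSet c)ᶜ ⊆ U := by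
  obtain ⟨h, hbdd, hx0, hU1⟩ := hX.2 Uᶜ hU.isClosed_compl x (notMem_compl_iff.mpr hx)
  refine ⟨1 - h, A.sub_mem A.one_mem (hA h hbdd), by simp [hx0], fun y hy => ?_⟩
  by_contra hyU
  exact hy (by simp [ZSet, hU1 y hyU])

end ZeroSets

theorem CompletelyFRegular.forall_mul_eq_zero_imp_iff {X F : Type*} [TopologicalSpace X]
    [Field F] [LinearOrder F] [IsStrictOrderedRing F] [TopologicalSpace F] [OrderTopology F]
    (hX : CompletelyFRegular X F) {A : Subring C(X, F)} (hA : IsIntermediate A)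
    (f g : C(X, F)) :
    (∀ c ∈ A, c * f = 0 → c * g = 0) ↔ interior (ZSet f) ⊆ interior (ZSet g) := by
  simp only [mul_eq_zero_iff_compl_ZSet_subset]
  constructor
  · refine fun hfg => interior_maximal (fun x hx => ?_) isOpen_interior
    obtain ⟨c, hcA, hcx, hc⟩ := hX.exists_mem_compl_ZSet_subset hA isOpen_interior hx
    exact hfg c hcA (hc.trans interior_subset) hcx
  · intro hfg c _ hc
    rw [← (isOpen_compl_ZSet c).subset_interior_iff] at hc ⊢
    exact hc.trans hfg

/-- For f in an intermediate ring A(X,F), P_f equals the set of g with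
int_X Z(f) ⊆ int_X Z(g). -/
theorem stmt1 {X F : Type*} [TopologicalSpace X] [Field F] [LinearOrder F] [IsStrictOrderedRing F]
    [TopologicalSpace F] [OrderTopology F]
    (hX : CompletelyFRegular X F)
    (A : Subring C(X, F)) (hA : IsIntermediate A)
    (f : A) :
    Pz f = {g : A | interior (ZSet (f : C(X, F))) ⊆ interior (ZSet (g : C(X, F)))} := by
  ext g
  rw [mem_Pz_iff, Set.mem_ofPred_eq, ← hX.forall_mul_eq_zero_imp_iff hA]
  simp only [Subtype.forall, Subtype.ext_iff, Subring.coe_mul, ZeroMemClass.coe_zero]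
end

section
/- Let F be a linear ordered field equipped with its order topology, X a completely F-regular space, A(X,F) an intermediate ring, and 𝒫 an ideal of closed sets in X. Then C_𝒫(X,F) ∩ A(X,F) = {f ∈ A(X,F) : cl_X(X \ Z(f)) ∈ 𝒫} is an ideal of the ring A(X,F), and for every f in this ideal, the intersection P_f of all minimal prime ideals of A(X,F) containing f is contained in this ideal; in particular, if this ideal is proper it is a z°-ideal of A(X,F). -/
open Set

/-!
The ideal is the preimage in `A(X,F)` of the ideal of `C(X,F)` of functions whose
closed support lies in `𝒫`. For the `z°` property, let `g ∈ P_a` and `x ∉ cl(X \ Z(a))`.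
Complete regularity gives a bounded `c ∈ A` with `c(x) = 1` and `c = 0` on `cl(X \ Z(a))`,
so `c a = 0`. Every minimal prime containing `a` contains `g`, and every other one contains
`c`; hence `g c` lies in all minimal primes, i.e. is nilpotent, and evaluating at `x`
gives `g(x) = 0`. Thus `cl(X \ Z(g)) ⊆ cl(X \ Z(a))`, which lies in `𝒫`.
-/

theorem isNilpotent_mul_of_mem_Pz {R : Type*} [CommRing R] {a c g : R} (hca : c * a = 0)
    (hg : g ∈ Pz a) : IsNilpotent (g * c) := by
  rw [← mem_nilradical, nilradical, ← Ideal.sInf_minimalPrimes, Submodule.mem_sInf]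
  intro (Q : Ideal R) hQ
  have : Q.IsPrime := hQ.1.1
  rcases this.mem_or_mem (hca ▸ Q.zero_mem : c * a ∈ Q) with hc | ha
  · exact Q.mul_mem_left g hc
  · exact Q.mul_mem_right c (mem_iInter₂.mp hg Q ⟨hQ, ha⟩)

namespace IsIdealOfClosedSets

variable {X : Type*} [TopologicalSpace X] {P : Set (Set X)}

theorem mem_of_subset (hP : IsIdealOfClosedSets P) {C D : Set X} (hC : IsClosed C)
    (hD : D ∈ P) (hCD : C ⊆ D) : C ∈ P :=
  hP.2.2.2 C hC D hD hCD

theorem empty_mem (hP : IsIdealOfClosedSets P) : ∅ ∈ P :=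
  hP.mem_of_subset isClosed_empty hP.1.some_mem (empty_subset _)

theorem union_mem (hP : IsIdealOfClosedSets P) {C D : Set X} (hC : C ∈ P) (hD : D ∈ P) :
    C ∪ D ∈ P :=
  hP.2.2.1 C hC D hD

def tsupportIdeal (R : Type*) [CommRing R] [TopologicalSpace R] [IsTopologicalRing R]
    (hP : IsIdealOfClosedSets P) : Ideal C(X, R) where
  carrier := {f | tsupport f ∈ P}
  zero_mem' := by
    simpa only [mem_ofPred_eq, ContinuousMap.coe_zero, tsupport_zero] using hP.empty_mem
  add_mem' hf hg := hP.mem_of_subset (isClosed_tsupport _) (hP.union_mem hf hg) (tsupport_add _ _)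
  smul_mem' _ _ hf := hP.mem_of_subset (isClosed_tsupport _) hf (tsupport_mul_subset_right)

end IsIdealOfClosedSets

section CompletelyFRegular

variable {X F : Type*} [TopologicalSpace X] [Field F] [LinearOrder F] [IsStrictOrderedRing F]
  [TopologicalSpace F] [OrderTopology F]

theorem CompletelyFRegular.exists_bddF_eq_one_eqOn_zero (hX : CompletelyFRegular X F)
    {K : Set X} (hK : IsClosed K) {x : X} (hx : x ∉ K) :
    ∃ c : C(X, F), BddF c ∧ c x = 1 ∧ EqOn c 0 K := by
  obtain ⟨h, ⟨l, hl, hlh⟩, hhx, hhK⟩ := hX.2 K hK x hx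
  refine ⟨1 - h, ⟨1 + l, by positivity, fun y => ?_⟩, by simp [hhx],
    fun k hk => by simp [hhK k hk]⟩
  calc |(1 - h) y| = |1 - h y| := rfl
    _ ≤ |1| + |h y| := abs_sub _ _
    _ ≤ 1 + l := by rw [abs_one]; linarith [hlh y]

theorem tsupport_subset_of_mem_Pz (hX : CompletelyFRegular X F) {A : Subring C(X, F)}
    (hA : IsIntermediate A) {a g : A} (hg : g ∈ Pz a) :
    tsupport (g : C(X, F)) ⊆ tsupport (a : C(X, F)) := by
  refine closure_minimal (fun x hgx => ?_) (isClosed_tsupport _)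
  by_contra hxa
  obtain ⟨c, hc, hcx, hcK⟩ := hX.exists_bddF_eq_one_eqOn_zero (isClosed_tsupport _) hxa
  have hca : (⟨c, hA c hc⟩ : A) * a = 0 := by
    ext z
    by_cases hz : (a : C(X, F)) z = 0
    · simp [hz]
    · simp [hcK (subset_tsupport _ hz)]
  have hgc := (isNilpotent_mul_of_mem_Pz hca hg).map
    ((Pi.evalRingHom _ x).comp (ContinuousMap.coeFnRingHom.comp A.subtype))
  simp only [RingHom.coe_comp, Function.comp_apply, map_mul, Subring.subtype_apply,
    ContinuousMap.coeFnRingHom_apply, Pi.evalRingHom_apply, hcx, mul_one] at hgc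
  exact hgx hgc.eq_zero

end CompletelyFRegular

/-- For an ideal P of closed sets in X, the set of f in A(X,F) with
cl_X(X minus Z(f)) in P is an ideal of A(X,F) satisfying P_f ⊆ I for all f in I;
in particular it is a z°-ideal whenever it is proper. -/
theorem stmt2 {X F : Type*} [TopologicalSpace X] [Field F] [LinearOrder F] [IsStrictOrderedRing F]
    [TopologicalSpace F] [OrderTopology F]
    (hX : CompletelyFRegular X F)
    (A : Subring C(X, F)) (hA : IsIntermediate A)
    (P : Set (Set X)) (hP : IsIdealOfClosedSets P) :
    ∃ I : Ideal A, (I : Set A) = {f : A | closure ((ZSet (f : C(X, F)))ᶜ) ∈ P} ∧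
      (∀ a ∈ I, Pz a ⊆ (I : Set A)) ∧ (I ≠ ⊤ → IsZoIdeal I) := by
  have hPz (a : A) (ha : tsupport (a : C(X, F)) ∈ P) :
      Pz a ⊆ {g : A | tsupport (g : C(X, F)) ∈ P} :=
    fun _ hg => hP.mem_of_subset (isClosed_tsupport _) ha (tsupport_subset_of_mem_Pz hX hA hg)
  exact ⟨(hP.tsupportIdeal F).comap A.subtype, rfl, hPz, fun hI => ⟨hI, hPz⟩⟩
end

section
/- Let F be a linear ordered field equipped with its order topology, X a completely F-regular space, and A(X,F) an intermediate ring. If I is a proper ideal of A(X,F) every nonzero element of which is a divisor of zero in A(X,F), then there exists a proper z°-ideal of A(X,F) containing I. -/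
open Set

/-
For `f ∈ I`, a witness `g ≠ 0` with `f g = 0` is nonzero on an open set on which `f` vanishes,
so `int Z(f) ≠ ∅`. Hence `J = {g | int Z(f) ⊆ Z(g) for some f ∈ I}` is a proper ideal containing `I`
(it is closed under sums because `Z(f₁² + f₂²) = Z(f₁) ∩ Z(f₂)`). It is a `z°`-ideal: if
`x ∈ int Z(a)`, complete regularity gives `k` with `k(x) = 1` and `a k = 0`, so `a` lies in every
minimal prime below the prime ideal `M_x = {g | g(x) = 0}`; some minimal prime lies below `M_x`,
hence every `b ∈ P_a` vanishes at `x`, i.e. `int Z(a) ⊆ Z(b)`.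
-/

theorem Pz_subset_of_mul_eq_zero {R : Type*} [CommRing R] {a k : R} (hak : a * k = 0)
    {M : Ideal R} [M.IsPrime] (hk : k ∉ M) : Pz a ⊆ M := by
  obtain ⟨p, hp, hpM⟩ := Ideal.exists_minimalPrimes_le (bot_le : ⊥ ≤ M)
  have hap : a ∈ p :=
    (hp.1.1.mem_or_mem (hak ▸ p.zero_mem)).resolve_right fun hkp => hk (hpM hkp)
  exact fun b hb => hpM (mem_iInter₂.mp hb p ⟨hp, hap⟩)

section ZeroSets

variable {X F : Type*} [TopologicalSpace X] [TopologicalSpace F]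

@[simp]
theorem mem_ZSet [Zero F] {f : C(X, F)} {x : X} : x ∈ ZSet f ↔ f x = 0 := Iff.rfl

theorem ZSet_zero [Zero F] : ZSet (0 : C(X, F)) = univ := eq_univ_of_forall fun _ => rfl

theorem ZSet_one [Zero F] [One F] [NeZero (1 : F)] : ZSet (1 : C(X, F)) = ∅ :=
  eq_empty_of_forall_notMem fun _ => one_ne_zero

theorem ZSet_subset_ZSet_mul_right [MulZeroClass F] [ContinuousMul F] (f g : C(X, F)) :
    ZSet g ⊆ ZSet (f * g) := fun x hx => by simp_all

theorem ZSet_inter_subset_ZSet_add [AddZeroClass F] [ContinuousAdd F] (f g : C(X, F)) :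
    ZSet f ∩ ZSet g ⊆ ZSet (f + g) := fun x hx => by simp_all

theorem ZSet_mul_self_add_mul_self [Ring F] [LinearOrder F] [IsStrictOrderedRing F]
    [IsTopologicalRing F] (f g : C(X, F)) :
    ZSet (f * f + g * g) = ZSet f ∩ ZSet g := by
  ext x
  simp [mul_self_add_mul_self_eq_zero]

theorem interior_ZSet_nonempty_of_mul_eq_zero [MulZeroClass F] [NoZeroDivisors F]
    [ContinuousMul F] [T1Space F] {f g : C(X, F)} (hfg : f * g = 0) (hg : g ≠ 0) :
    (interior (ZSet f)).Nonempty := by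
  obtain ⟨x, hx⟩ := DFunLike.ne_iff.mp hg
  refine ⟨x, mem_interior.mpr ⟨g ⁻¹' {0}ᶜ, fun y hy => ?_,
    isOpen_compl_singleton.preimage g.continuous, hx⟩⟩
  exact (mul_eq_zero.mp (DFunLike.congr_fun hfg y)).resolve_right hy

end ZeroSets

section IntermediateRing

variable {X F : Type*} [TopologicalSpace X] [Field F] [LinearOrder F] [IsStrictOrderedRing F]
  [TopologicalSpace F] [OrderTopology F]

theorem CompletelyFRegular.exists_bddF_eq_one_of_mem_isOpen (hX : CompletelyFRegular X F)
    {U : Set X} (hU : IsOpen U) {x : X} (hx : x ∈ U) :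
    ∃ k : C(X, F), BddF k ∧ k x = 1 ∧ ∀ y ∉ U, k y = 0 := by
  obtain ⟨f, ⟨l, hl, hfl⟩, hfx, hf1⟩ := hX.2 Uᶜ hU.isClosed_compl x (not_not.mpr hx)
  refine ⟨1 - f, ⟨1 + l, by positivity, fun y => ?_⟩, by simp [hfx], fun y hy => by simp [hf1 y hy]⟩
  calc |(1 - f) y| ≤ |1| + |f y| := abs_sub _ _
    _ ≤ 1 + l := by rw [abs_one]; gcongr; exact hfl y

variable {A : Subring C(X, F)}

theorem interior_ZSet_subset_ZSet_of_mem_Pz (hX : CompletelyFRegular X F) (hA : IsIntermediate A)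
    {a b : A} (hb : b ∈ Pz a) : interior (ZSet (a : C(X, F))) ⊆ ZSet (b : C(X, F)) := by
  intro x hx
  obtain ⟨k, hkb, hkx, hk0⟩ := hX.exists_bddF_eq_one_of_mem_isOpen isOpen_interior hx
  let ev : A →+* F := ((Pi.evalRingHom (fun _ => F) x).comp ContinuousMap.coeFnRingHom).comp A.subtype
  have hak : a * ⟨k, hA k hkb⟩ = 0 := by
    ext y
    by_cases hy : y ∈ interior (ZSet (a : C(X, F)))
    · simp [mem_ZSet.mp (interior_subset hy)]
    · simp [hk0 y hy]
  have := RingHom.ker_isPrime ev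
  have hk : (⟨k, hA k hkb⟩ : A) ∉ RingHom.ker ev := by simp [ev, hkx]
  simpa [ev] using Pz_subset_of_mul_eq_zero hak hk hb

def zeroInteriorIdeal (I : Ideal A) : Ideal A where
  carrier := {g | ∃ f ∈ I, interior (ZSet (f : C(X, F))) ⊆ ZSet (g : C(X, F))}
  zero_mem' := ⟨0, I.zero_mem, fun _ _ => rfl⟩
  add_mem' := by
    rintro g₁ g₂ ⟨f₁, hf₁, hs₁⟩ ⟨f₂, hf₂, hs₂⟩
    refine ⟨f₁ * f₁ + f₂ * f₂, I.add_mem (I.mul_mem_left _ hf₁) (I.mul_mem_left _ hf₂), ?_⟩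
    calc interior (ZSet ((f₁ * f₁ + f₂ * f₂ : A) : C(X, F)))
        = interior (ZSet (f₁ : C(X, F))) ∩ interior (ZSet (f₂ : C(X, F))) := by
          rw [← interior_inter, ← ZSet_mul_self_add_mul_self]; rfl
      _ ⊆ ZSet (g₁ : C(X, F)) ∩ ZSet (g₂ : C(X, F)) := inter_subset_inter hs₁ hs₂
      _ ⊆ ZSet ((g₁ + g₂ : A) : C(X, F)) := ZSet_inter_subset_ZSet_add _ _
  smul_mem' := by
    rintro c g ⟨f, hf, hs⟩
    exact ⟨f, hf, hs.trans (ZSet_subset_ZSet_mul_right (c : C(X, F)) g)⟩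

theorem mem_zeroInteriorIdeal {I : Ideal A} {g : A} :
    g ∈ zeroInteriorIdeal I ↔ ∃ f ∈ I, interior (ZSet (f : C(X, F))) ⊆ ZSet (g : C(X, F)) :=
  Iff.rfl

theorem le_zeroInteriorIdeal (I : Ideal A) : I ≤ zeroInteriorIdeal I :=
  fun f hf => mem_zeroInteriorIdeal.mpr ⟨f, hf, interior_subset⟩

theorem isZoIdeal_zeroInteriorIdeal (hX : CompletelyFRegular X F) (hA : IsIntermediate A)
    {I : Ideal A} (hI : ∀ f ∈ I, (interior (ZSet (f : C(X, F)))).Nonempty) :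
    IsZoIdeal (zeroInteriorIdeal I) := by
  refine ⟨fun htop => ?_, fun a ha b hb => ?_⟩
  · obtain ⟨f, hf, hf1⟩ := mem_zeroInteriorIdeal.mp ((Ideal.eq_top_iff_one _).mp htop)
    obtain ⟨x, hx⟩ := hI f hf
    simpa [ZSet_one] using hf1 hx
  · obtain ⟨f, hf, hfa⟩ := mem_zeroInteriorIdeal.mp ha
    exact ⟨f, hf, (interior_maximal hfa isOpen_interior).trans
      (interior_ZSet_subset_ZSet_of_mem_Pz hX hA hb)⟩

end IntermediateRing

/-- A proper ideal of A(X,F) all of whose nonzero elements are zero divisors extends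
to a proper z°-ideal. -/
theorem stmt4 {X F : Type*} [TopologicalSpace X] [Field F] [LinearOrder F] [IsStrictOrderedRing F]
    [TopologicalSpace F] [OrderTopology F]
    (hX : CompletelyFRegular X F)
    (A : Subring C(X, F)) (hA : IsIntermediate A)
    (I : Ideal A) (hI : I ≠ ⊤)
    (hdiv : ∀ f ∈ I, f ≠ 0 → ∃ g : A, g ≠ 0 ∧ f * g = 0) :
    ∃ J : Ideal A, IsZoIdeal J ∧ I ≤ J := by
  have : Nonempty X := not_isEmpty_iff.mp fun _ => hI (Subsingleton.elim _ _)
  have hI_interior : ∀ f ∈ I, (interior (ZSet (f : C(X, F)))).Nonempty := by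
    intro f hf
    by_cases hf0 : f = 0
    · simp [hf0, ZSet_zero]
    obtain ⟨g, hg0, hfg⟩ := hdiv f hf hf0
    exact interior_ZSet_nonempty_of_mul_eq_zero (g := (g : C(X, F)))
      (congrArg Subtype.val hfg) (Subtype.coe_injective.ne hg0)
  exact ⟨zeroInteriorIdeal I, isZoIdeal_zeroInteriorIdeal hX hA hI_interior, le_zeroInteriorIdeal I⟩
end

section
/- Let F be a linear ordered field equipped with its order topology, X a topological space, and A(X,F) an intermediate ring. Then A(X,F) is an absolutely convex subring of C(X,F): if f ∈ C(X,F), g ∈ A(X,F) and |f(x)| ≤ |g(x)| for all x ∈ X, then f ∈ A(X,F). -/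
open Set

/-!
Write `f = (f / (1 + g²)) · (1 + g²)`. Since `|f| ≤ |g| ≤ 1 + g²`, the first factor is bounded
by `1`, hence lies in `A`; the second factor lies in `A` because `g` does.
-/

theorem abs_le_one_add_sq {F : Type*} [Field F] [LinearOrder F] [IsStrictOrderedRing F] (b : F) :
    |b| ≤ 1 + b ^ 2 := by
  nlinarith [sq_abs b, abs_nonneg b, sq_nonneg (|b| - 1)]

section DivOneAddSq

variable {X F : Type*} [TopologicalSpace X] [Field F] [LinearOrder F] [IsStrictOrderedRing F]
  [TopologicalSpace F] [OrderTopology F]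

def divOneAddSq (f g : C(X, F)) : C(X, F) where
  toFun x := f x / (1 + g x ^ 2)
  continuous_toFun := f.continuous.div (by fun_prop) fun x => by positivity

theorem divOneAddSq_mul (f g : C(X, F)) : divOneAddSq f g * (1 + g ^ 2) = f := by
  ext x
  have hx : (1 + g x ^ 2 : F) ≠ 0 := by positivity
  simp [divOneAddSq, div_mul_cancel₀ _ hx]

theorem bddF_divOneAddSq {f g : C(X, F)} (hfg : ∀ x, |f x| ≤ |g x|) :
    BddF (divOneAddSq f g) := by
  refine ⟨1, one_pos, fun x => ?_⟩
  have hpos : (0 : F) < 1 + g x ^ 2 := by positivity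
  rw [divOneAddSq, ContinuousMap.coe_mk, abs_div, abs_of_pos hpos, div_le_one hpos]
  exact (hfg x).trans (abs_le_one_add_sq (g x))

end DivOneAddSq

/-- An intermediate ring A(X,F) is an absolutely convex subring of C(X,F). -/
theorem stmt5 {X F : Type*} [TopologicalSpace X] [Field F] [LinearOrder F] [IsStrictOrderedRing F]
    [TopologicalSpace F] [OrderTopology F]
    (A : Subring C(X, F)) (hA : IsIntermediate A)
    (f g : C(X, F)) (hg : g ∈ A) (hfg : ∀ x, |f x| ≤ |g x|) :
    f ∈ A := by
  rw [← divOneAddSq_mul f g]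
  exact A.mul_mem (hA _ (bddF_divOneAddSq hfg)) (A.add_mem A.one_mem (A.pow_mem hg 2))
end

section
/- Let F be a linear ordered field equipped with its order topology, X a completely F-regular space, and A(X,F) an intermediate ring. If A(X,F) is von Neumann regular (for every f ∈ A(X,F) there exists g ∈ A(X,F) with f = f·g·f), then A(X,F) = C(X,F). -/
/- For `f ∈ C(X,F)` the functions `1 / (1 + f²)` and `f / (1 + f²)` are bounded, hence lie
in `A`. An element of a von Neumann regular subring that is invertible in the ambient
commutative ring has its inverse in the subring, so `1 + f² ∈ A` and `f = f / (1 + f²) · (1 + f²) ∈ A`. -/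

open Set

theorem Subring.mem_of_mul_eq_one_of_regular {R : Type*} [CommRing R] {A : Subring R}
    (hreg : ∀ a : A, ∃ c : A, a = a * c * a) {a b : R} (ha : a ∈ A) (hab : a * b = 1) :
    b ∈ A := by
  obtain ⟨c, hc⟩ := hreg ⟨a, ha⟩
  have hc' : a = a * c * a := congrArg Subtype.val hc
  have hbc : b = c :=
    calc b = a * b * b := by rw [hab, one_mul]
      _ = a * c * a * b * b := by rw [← hc']
      _ = c * (a * b) * (a * b) := by ring
      _ = c := by rw [hab, mul_one, mul_one]
  exact hbc ▸ c.2

section OneAddSq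

variable {F : Type*} [Field F] [LinearOrder F] [IsStrictOrderedRing F]

theorem one_le_one_add_sq (a : F) : 1 ≤ 1 + a ^ 2 :=
  le_add_of_nonneg_right (sq_nonneg a)

theorem one_add_sq_pos (a : F) : 0 < 1 + a ^ 2 :=
  zero_lt_one.trans_le (one_le_one_add_sq a)

theorem abs_inv_one_add_sq_le_one (a : F) : |(1 + a ^ 2)⁻¹| ≤ 1 := by
  rw [abs_of_pos (inv_pos.2 (one_add_sq_pos a))]
  exact inv_le_one_of_one_le₀ (one_le_one_add_sq a)

theorem abs_mul_inv_one_add_sq_le_one (a : F) : |a * (1 + a ^ 2)⁻¹| ≤ 1 := by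
  have habs : |a| ≤ 1 + a ^ 2 := by
    nlinarith [sq_abs a, sq_nonneg (|a| - 1)]
  rw [abs_mul, abs_inv, abs_of_pos (one_add_sq_pos a), ← div_eq_mul_inv]
  exact (div_le_one (one_add_sq_pos a)).2 habs

end OneAddSq

section InvOneAddSq

variable {X F : Type*} [TopologicalSpace X] [Field F] [LinearOrder F] [IsStrictOrderedRing F]
  [TopologicalSpace F] [OrderTopology F]

def invOneAddSq (f : C(X, F)) : C(X, F) :=
  ⟨fun x => (1 + f x ^ 2)⁻¹,
    (continuous_const.add (f.continuous.pow 2)).inv₀ fun x => (one_add_sq_pos (f x)).ne'⟩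

theorem one_add_sq_mul_invOneAddSq (f : C(X, F)) : (1 + f ^ 2) * invOneAddSq f = 1 := by
  ext x
  exact mul_inv_cancel₀ (one_add_sq_pos (f x)).ne'

theorem bddF_invOneAddSq (f : C(X, F)) : BddF (invOneAddSq f) :=
  ⟨1, one_pos, fun x => abs_inv_one_add_sq_le_one (f x)⟩

theorem bddF_mul_invOneAddSq (f : C(X, F)) : BddF (f * invOneAddSq f) :=
  ⟨1, one_pos, fun x => abs_mul_inv_one_add_sq_le_one (f x)⟩

end InvOneAddSq

theorem stmt6_general {X F : Type*} [TopologicalSpace X] [Field F] [LinearOrder F] [IsStrictOrderedRing F]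
    [TopologicalSpace F] [OrderTopology F]
    (A : Subring C(X, F)) (hA : IsIntermediate A)
    (hreg : ∀ f : A, ∃ g : A, f = f * g * f) :
    A = ⊤ := by
  refine eq_top_iff.2 fun f _ => ?_
  have hd : 1 + f ^ 2 ∈ A :=
    Subring.mem_of_mul_eq_one_of_regular hreg (hA _ (bddF_invOneAddSq f))
      (by rw [mul_comm, one_add_sq_mul_invOneAddSq])
  have hf : f = f * invOneAddSq f * (1 + f ^ 2) := by
    rw [mul_assoc, mul_comm (invOneAddSq f), one_add_sq_mul_invOneAddSq, mul_one]
  rw [hf]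
  exact mul_mem (hA _ (bddF_mul_invOneAddSq f)) hd

/-- If an intermediate ring A(X,F) is von Neumann regular then A(X,F) = C(X,F). -/
theorem stmt6 {X F : Type*} [TopologicalSpace X] [Field F] [LinearOrder F] [IsStrictOrderedRing F]
    [TopologicalSpace F] [OrderTopology F]
    (hX : CompletelyFRegular X F)
    (A : Subring C(X, F)) (hA : IsIntermediate A)
    (hreg : ∀ f : A, ∃ g : A, f = f * g * f) :
    A = ⊤ :=
  stmt6_general A hA hreg
end

section
/- Let F be a linear ordered field equipped with its order topology such that F is Cauchy complete and has cofinality ω₀, and let X be a completely F-regular space. Then X is an almost P_F-space (every nonempty zero set Z(f) with f ∈ C(X,F) has nonempty interior in X) if and only if X is an almost P-space (every nonempty Gδ subset of X has nonempty interior in X). -/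
/-!
A zero set `Z(f) = ⋂ₙ {|f| < δₙ}` is a Gδ as soon as some sequence `δₙ > 0` tends to `0`, which
cofinality `ω₀` provides; so almost `P` implies almost `P_F`. Conversely, if `x ∈ ⋂ₙ Uₙ` with
`Uₙ` open, complete `F`-regularity gives `φₙ : X → [0,1]` vanishing at `x` and equal to `1`
off `Uₙ`. Choosing `δₙ → 0` with `2 δₙ₊₁ ≤ δₙ`, the series `h = ∑ δₙ φₙ` has tails bounded by
`2 δₙ`; Cauchy completeness makes it converge, uniformly, so `h` is continuous, and
`x ∈ Z(h) ⊆ ⋂ₙ Uₙ`. Hence every nonempty Gδ contains a nonempty zero set.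
-/

open Set

/-- F is Cauchy complete: every Cauchy sequence in F converges in the order topology. -/
def CauchyCompleteField (F : Type*) [Field F] [LinearOrder F] [IsStrictOrderedRing F] [TopologicalSpace F] : Prop :=
  ∀ a : ℕ → F, (∀ ε : F, 0 < ε → ∃ N : ℕ, ∀ m ≥ N, ∀ n ≥ N, |a m - a n| < ε) →
    ∃ l : F, Filter.Tendsto a Filter.atTop (nhds l)

/-- F has cofinality ω₀: a countable sequence is cofinal in F. -/
def CofinalityOmega (F : Type*) [Preorder F] : Prop :=
  ∃ s : ℕ → F, ∀ x : F, ∃ n : ℕ, x ≤ s n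

open Filter Topology

section OrderedField

variable {F : Type*} [Field F] [LinearOrder F] [IsStrictOrderedRing F]

lemma sum_Ico_add_two_mul_le {δ : ℕ → F} (hδ : ∀ n, 2 * δ (n + 1) ≤ δ n) {n m : ℕ}
    (hnm : n ≤ m) : ∑ k ∈ Finset.Ico n m, δ k + 2 * δ m ≤ 2 * δ n := by
  induction m, hnm using Nat.le_induction with
  | base => simp
  | succ m hnm ih =>
    rw [Finset.sum_Ico_succ_top hnm]
    linarith [hδ m]

variable [TopologicalSpace F] [OrderTopology F]

lemma CofinalityOmega.exists_halving_tendsto_zero (hcf : CofinalityOmega F) :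
    ∃ δ : ℕ → F, (∀ n, 0 < δ n) ∧ (∀ n, 2 * δ (n + 1) ≤ δ n) ∧ Tendsto δ atTop (𝓝 0) := by
  obtain ⟨s, hs⟩ := hcf
  set w : ℕ → F := fun n => 2 ^ n * max (partialSups s n) 1
  have hw_pos : ∀ n, 0 < w n := fun n => by positivity
  have hw_double : ∀ n, 2 * w n ≤ w (n + 1) := fun n => by
    have : max (partialSups s n) 1 ≤ max (partialSups s (n + 1)) 1 :=
      max_le_max_right _ (partialSups_monotone s n.le_succ)
    calc 2 * w n = 2 ^ (n + 1) * max (partialSups s n) 1 := by simp only [w]; ring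
      _ ≤ w (n + 1) := by simp only [w]; gcongr
  have hw_atTop : Tendsto w atTop atTop := by
    refine tendsto_atTop_mono (fun n => ?_) <|
      tendsto_atTop_atTop_of_monotone (partialSups_monotone s) fun b =>
        (hs b).imp fun n hn => hn.trans (le_partialSups s n)
    calc partialSups s n ≤ max (partialSups s n) 1 := le_max_left _ _
      _ ≤ w n := le_mul_of_one_le_left (by positivity) (one_le_pow₀ one_le_two)
  refine ⟨fun n => (w n)⁻¹, fun n => inv_pos.2 (hw_pos n), fun n => ?_,
    tendsto_inv_atTop_zero.comp hw_atTop⟩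
  have := hw_pos n
  calc 2 * (w (n + 1))⁻¹ ≤ 2 * (2 * w n)⁻¹ := by gcongr; exact hw_double n
    _ = (w n)⁻¹ := by field_simp

lemma CofinalityOmega.isGδ_singleton_zero (hcf : CofinalityOmega F) : IsGδ ({0} : Set F) := by
  obtain ⟨δ, hδ_pos, -, hδ_lim⟩ := hcf.exists_halving_tendsto_zero
  have : ({0} : Set F) = ⋂ n, {a : F | |a| < δ n} := by
    ext a
    simp only [mem_singleton_iff, mem_iInter, mem_ofPred_eq]
    refine ⟨fun ha n => by simpa [ha] using hδ_pos n, fun ha => ?_⟩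
    exact abs_nonpos_iff.1 (ge_of_tendsto' hδ_lim fun n => (ha n).le)
  rw [this]
  exact .iInter fun n => (isOpen_lt continuous_abs continuous_const).isGδ

lemma CauchyCompleteField.exists_partialSum_le_le_add (hcc : CauchyCompleteField F)
    {δ g : ℕ → F} (hδ : ∀ n, 2 * δ (n + 1) ≤ δ n) (hδ_lim : Tendsto δ atTop (𝓝 0))
    (hg_nonneg : ∀ k, 0 ≤ g k) (hg_le : ∀ k, g k ≤ δ k) :
    ∃ l, ∀ n, ∑ k ∈ Finset.range n, g k ≤ l ∧ l ≤ ∑ k ∈ Finset.range n, g k + 2 * δ n := by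
  set S : ℕ → F := fun n => ∑ k ∈ Finset.range n, g k
  have hS_mono : Monotone S := monotone_nat_of_le_succ fun n => by
    simp only [S, Finset.sum_range_succ]
    linarith [hg_nonneg n]
  have hS_tail : ∀ n m, n ≤ m → S m ≤ S n + 2 * δ n := fun n m hnm => by
    have hsum : S m - S n ≤ ∑ k ∈ Finset.Ico n m, δ k := by
      rw [← Finset.sum_Ico_eq_sub _ hnm]
      exact Finset.sum_le_sum fun k _ => hg_le k
    linarith [sum_Ico_add_two_mul_le hδ hnm, hg_nonneg m, hg_le m]
  obtain ⟨l, hl⟩ : ∃ l, Tendsto S atTop (𝓝 l) := by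
    refine hcc S fun ε hε => ?_
    obtain ⟨N, hN⟩ := eventually_atTop.1 (hδ_lim.eventually (gt_mem_nhds (half_pos hε)))
    refine ⟨N, fun m hm n hn => abs_sub_lt_iff.2 ?_⟩
    rcases le_total n m with h | h
    · constructor <;> linarith [hS_tail n m h, hS_mono h, hN n hn]
    · constructor <;> linarith [hS_tail m n h, hS_mono h, hN m hm]
  exact ⟨l, fun n => ⟨ge_of_tendsto hl (eventually_atTop.2 ⟨n, fun m => (hS_mono ·)⟩),
    le_of_tendsto hl (eventually_atTop.2 ⟨n, hS_tail n⟩)⟩⟩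

variable {X : Type*} [TopologicalSpace X]

lemma continuous_of_abs_sub_le {S : ℕ → X → F} {h : X → F} {c : ℕ → F}
    (hS : ∀ n, Continuous (S n)) (hc : Tendsto c atTop (𝓝 0)) (hSh : ∀ n y, |h y - S n y| ≤ c n) :
    Continuous h := by
  refine continuous_iff_continuousAt.2 fun y₀ => ?_
  refine LinearOrderedAddCommGroup.tendsto_nhds.2 fun ε hε => ?_
  obtain ⟨n, hn⟩ := (hc.eventually (gt_mem_nhds (show 0 < ε / 3 by positivity))).exists
  have hSn := LinearOrderedAddCommGroup.tendsto_nhds.1 ((hS n).tendsto y₀) (ε / 3) (by positivity)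
  filter_upwards [hSn] with y hy
  have hy₀ := abs_le.1 (hSh n y₀)
  have hy' := abs_le.1 (hSh n y)
  have := abs_lt.1 hy
  exact abs_lt.2 ⟨by linarith, by linarith⟩

lemma isGδ_zeroSet (hcf : CofinalityOmega F) (f : C(X, F)) : IsGδ (ZSet f) :=
  hcf.isGδ_singleton_zero.preimage f.continuous

lemma CompletelyFRegular.exists_unit_bump (hX : CompletelyFRegular X F) {U : Set X}
    (hU : IsOpen U) {x : X} (hx : x ∈ U) :
    ∃ φ : C(X, F), φ x = 0 ∧ (∀ y, 0 ≤ φ y ∧ φ y ≤ 1) ∧ ∀ y ∉ U, φ y = 1 := by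
  obtain ⟨f, -, hfx, hfU⟩ := hX.2 Uᶜ hU.isClosed_compl x (not_not_intro hx)
  refine ⟨⟨fun y => min |f y| 1, by fun_prop⟩, by simp [hfx],
    fun y => ⟨le_min (abs_nonneg _) zero_le_one, min_le_right _ _⟩, fun y hy => ?_⟩
  simp [hfU y hy]

lemma IsGδ.exists_zeroSet_subset (hcc : CauchyCompleteField F) (hcf : CofinalityOmega F)
    (hX : CompletelyFRegular X F) {G : Set X} (hG : IsGδ G) {x : X} (hx : x ∈ G) :
    ∃ f : C(X, F), x ∈ ZSet f ∧ ZSet f ⊆ G := by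
  obtain ⟨U, hU_open, rfl⟩ := isGδ_iff_eq_iInter_nat.1 hG
  obtain ⟨δ, hδ_pos, hδ, hδ_lim⟩ := hcf.exists_halving_tendsto_zero
  choose φ hφx hφ_mem hφU using fun n => hX.exists_unit_bump (hU_open n) (mem_iInter.1 hx n)
  set S : ℕ → X → F := fun n y => ∑ k ∈ Finset.range n, δ k * φ k y
  choose h hSh using fun y => hcc.exists_partialSum_le_le_add (g := fun k => δ k * φ k y) hδ
    hδ_lim (fun k => mul_nonneg (hδ_pos k).le (hφ_mem k y).1)
    (fun k => mul_le_of_le_one_right (hδ_pos k).le (hφ_mem k y).2)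
  have h_cont : Continuous h := by
    refine continuous_of_abs_sub_le (S := S) (c := fun n => 2 * δ n) (fun n => by fun_prop)
      (by simpa using hδ_lim.const_mul 2) fun n y => ?_
    rw [abs_sub_le_iff]
    constructor <;> linarith [hSh y n]
  refine ⟨⟨h, h_cont⟩, ?_, fun y hy => mem_iInter.2 fun n => ?_⟩
  · refine le_antisymm ?_ (by simpa using (hSh x 0).1)
    exact ge_of_tendsto' (by simpa using hδ_lim.const_mul 2) fun n => by
      simpa [hφx] using (hSh x n).2
  · by_contra hyU
    have hδn : δ n ≤ S (n + 1) y := by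
      simpa [hφU n y hyU] using Finset.single_le_sum (f := fun k => δ k * φ k y)
        (fun k _ => mul_nonneg (hδ_pos k).le (hφ_mem k y).1) (Finset.self_mem_range_succ n)
    have hy0 : h y = 0 := hy
    linarith [(hSh y (n + 1)).1, hδ_pos n]

end OrderedField

/-- For Cauchy complete F of cofinality ω₀: X is an almost P_F-space iff X is an
almost P-space (every nonempty Gδ set has nonempty interior). -/
theorem stmt10 {X F : Type*} [TopologicalSpace X] [Field F] [LinearOrder F] [IsStrictOrderedRing F]
    [TopologicalSpace F] [OrderTopology F]
    (hcc : CauchyCompleteField F) (hcf : CofinalityOmega F)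
    (hX : CompletelyFRegular X F) :
    AlmostPF X F ↔ ∀ G : Set X, IsGδ G → G.Nonempty → (interior G).Nonempty := by
  constructor
  · rintro hPF G hG ⟨x, hx⟩
    obtain ⟨f, hxf, hfG⟩ := hG.exists_zeroSet_subset hcc hcf hX hx
    exact (hPF f ⟨x, hxf⟩).mono (interior_mono hfG)
  · exact fun hG f hf => hG _ (isGδ_zeroSet hcf f) hf
end

section
/- Let R be a commutative von Neumann regular ring with identity (for every a ∈ R there exists b ∈ R with a = a·b·a). Then every proper ideal of R is a z°-ideal. -/
open Set

/-! In a von Neumann regular ring every prime ideal is minimal, so `Pz a` is the intersection of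
all primes containing `a`, i.e. the radical of `(a)`; and every ideal is radical, because
`x = (x * c ^ n) * x ^ n` when `x = x * c * x`. Hence `Pz a ⊆ √(a) ⊆ √I = I` for `a ∈ I`. -/

section VonNeumannRegular

variable {R : Type*} [CommRing R]

theorem Ideal.isRadical_of_vonNeumannRegular (hreg : ∀ a : R, ∃ b : R, a = a * b * a)
    (I : Ideal R) : I.IsRadical := by
  rintro x ⟨n, hn⟩
  obtain ⟨c, hc⟩ := hreg x
  have hpow : ∀ m : ℕ, x = x * c ^ m * x ^ m := by
    intro m
    induction m with
    | zero => simp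
    | succ k ih => linear_combination ih + c ^ k * x ^ k * hc
  rw [hpow n]
  exact I.mul_mem_left _ hn

theorem Ideal.IsPrime.mem_minimalPrimes_of_vonNeumannRegular
    (hreg : ∀ a : R, ∃ b : R, a = a * b * a) {P : Ideal R} (hP : P.IsPrime) :
    P ∈ minimalPrimes R := by
  refine ⟨⟨hP, bot_le⟩, ?_⟩
  rintro Q ⟨hQ, -⟩ hQP y hy
  obtain ⟨c, hc⟩ := hreg y
  have hzero : y * (1 - c * y) ∈ Q := by
    rw [show y * (1 - c * y) = 0 by linear_combination hc]
    exact Q.zero_mem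
  refine (hQ.mem_or_mem hzero).resolve_right fun h => hP.ne_top ?_
  rw [Ideal.eq_top_iff_one, show (1 : R) = (1 - c * y) + c * y by ring]
  exact P.add_mem (hQP h) (P.mul_mem_left c hy)

theorem Pz_subset_radical_span (hmin : ∀ P : Ideal R, P.IsPrime → P ∈ minimalPrimes R) (a : R) :
    Pz a ⊆ (Ideal.span {a}).radical := by
  intro x hx
  rw [SetLike.mem_coe, Ideal.radical_eq_sInf, Ideal.mem_sInf]
  rintro P ⟨haP, hP⟩
  exact mem_iInter₂.mp hx P ⟨hmin P hP, haP (Ideal.mem_span_singleton_self a)⟩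

end VonNeumannRegular

theorem stmt18_general {R : Type*} [CommRing R]
    (hreg : ∀ a : R, ∃ b : R, a = a * b * a)
    (I : Ideal R) :
    ∀ a ∈ I, Pz a ⊆ (I : Set R) := by
  intro a ha
  calc Pz a ⊆ (Ideal.span {a}).radical :=
        Pz_subset_radical_span (fun _ hP => hP.mem_minimalPrimes_of_vonNeumannRegular hreg) a
    _ ⊆ I := (Ideal.isRadical_of_vonNeumannRegular hreg I).radical_le_iff.mpr
        (Ideal.span_singleton_le_iff_mem I |>.mpr ha)

/-- In a commutative von Neumann regular ring, every proper ideal is a z°-ideal. -/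
theorem stmt18 {R : Type*} [CommRing R]
    (hreg : ∀ a : R, ∃ b : R, a = a * b * a)
    (I : Ideal R) (hI : I ≠ ⊤) :
    ∀ a ∈ I, Pz a ⊆ (I : Set R) :=
  stmt18_general hreg I
end
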